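/- arXiv:1103.0444 — 6 statements merged into one kernel-verified Lean document; each statement's English description precedes it below -/
import Mathlib

section
/- Let d ≥ 1 and k ≥ 2d be integers and k₀ = ⌊k/2⌋. Then ϑ(complement of K_{k/d}) equals the maximum of k·f_0 over all tuples (f_0, …, f_{k₀}) of real numbers satisfying f_j ≥ 0 for all j, Σ_{j=0}^{k₀} f_j = 1, and Σ_{j=0}^{k₀} f_j cos(2jℓπ/k) = 0 for every 1 ≤ ℓ ≤ d−1. -/
/-!
For a feasible matrix `B` of the theta program of the complement of `K_{k/d}`, the averages
`λ_ℓ = (1/k) ∑_{x,y} B x y cos (2πℓ(x - y)/k)` are nonnegative (each is a sum of two values of the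
quadratic form of `B`), sum to the trace of `B` by orthogonality of the characters of `ℤ/kℤ`,
and satisfy `∑_ℓ λ_ℓ cos (2πℓt/k) = 0` for `1 ≤ t < d`, because `B` vanishes on pairs at
cyclic distance `t`. Folding `λ_ℓ` with `λ_{k-ℓ}` gives an LP solution `f` with `k f₀ = ∑ B`.
Conversely, an LP solution `f` gives the circulant matrix
`B x y = (1/k) ∑_j f_j cos (2πj(x - y)/k)`, a nonnegative combination of the rank-two matrices
`c cᵀ + s sᵀ` with `c = cos θ`, `s = sin θ`, which is feasible with `∑ B = k f₀`.
So the two programs have the same set of values.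
-/

open Real Polynomial Finset

noncomputable section

/-- The circular complete graph `K_{k/d}`: vertices `0,…,k-1`, with `i ~ j` iff
`d ≤ |i-j| ≤ k-d`. -/
def circularCompleteGraph (k d : ℕ) : SimpleGraph (Fin k) where
  Adj i j := i ≠ j ∧ (d : ℤ) ≤ |((i : ℕ) : ℤ) - ((j : ℕ) : ℤ)| ∧
      |((i : ℕ) : ℤ) - ((j : ℕ) : ℤ)| ≤ (k : ℤ) - d
  symm := by
    refine ⟨?_⟩
    rintro i j ⟨hne, h1, h2⟩
    exact ⟨hne.symm, by rwa [abs_sub_comm], by rwa [abs_sub_comm]⟩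
  loopless := by refine ⟨?_⟩; rintro i ⟨h, -, -⟩; exact h rfl

/-- The Lovász theta number of a finite graph, as the maximum of `∑_{x,y} B x y` over
symmetric positive semidefinite matrices `B` with trace `1` vanishing on edges. -/
def lovaszTheta {V : Type*} [Fintype V] (G : SimpleGraph V) : ℝ :=
  sSup {r : ℝ | ∃ B : Matrix V V ℝ, B.PosSemidef ∧ (∑ x, B x x) = 1 ∧
    (∀ x y, G.Adj x y → B x y = 0) ∧ r = ∑ x, ∑ y, B x y}

theorem sum_range_exp_two_pi_I_mul_div {k : ℕ} (hk : k ≠ 0) (m : ℤ) :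
    ∑ ℓ ∈ range k, Complex.exp (2 * π * Complex.I * ℓ * m / k) =
      if (k : ℤ) ∣ m then (k : ℂ) else 0 := by
  have hζ := Complex.isPrimitiveRoot_exp k hk
  have hterm (ℓ : ℕ) :
      Complex.exp (2 * π * Complex.I * ℓ * m / k) =
        (Complex.exp (2 * π * Complex.I / k) ^ m) ^ ℓ := by
    rw [← zpow_natCast, ← zpow_mul, ← Complex.exp_int_mul]
    push_cast
    ring_nf
  have hzk : (Complex.exp (2 * π * Complex.I / k) ^ m) ^ k = 1 := by
    rw [← zpow_natCast, ← zpow_mul]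
    exact (hζ.zpow_eq_one_iff_dvd _).mpr ⟨m, mul_comm _ _⟩
  rw [sum_congr rfl fun ℓ _ => hterm ℓ]
  split_ifs with hm
  · simp [(hζ.zpow_eq_one_iff_dvd m).mpr hm]
  · rw [geom_sum_eq (mt (hζ.zpow_eq_one_iff_dvd m).mp hm), hzk, sub_self, zero_div]

theorem sum_range_cos_two_pi_mul_div {k : ℕ} (hk : k ≠ 0) (m : ℤ) :
    ∑ ℓ ∈ range k, cos (2 * π * ℓ * m / k) = if (k : ℤ) ∣ m then (k : ℝ) else 0 := by
  have h := congrArg Complex.re (sum_range_exp_two_pi_I_mul_div hk m)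
  rw [Complex.re_sum] at h
  convert h using 2 with ℓ
  · rw [← Complex.exp_ofReal_mul_I_re]; push_cast; ring_nf
  · split_ifs <;> simp

theorem sum_range_sin_two_pi_mul_div {k : ℕ} (hk : k ≠ 0) (m : ℤ) :
    ∑ ℓ ∈ range k, sin (2 * π * ℓ * m / k) = 0 := by
  have h := congrArg Complex.im (sum_range_exp_two_pi_I_mul_div hk m)
  rw [Complex.im_sum] at h
  convert h using 2 with ℓ
  · rw [← Complex.exp_ofReal_mul_I_im]; push_cast; ring_nf
  · split_ifs <;> simp

theorem sum_range_cos_mul_cos_two_pi_mul_div {k : ℕ} (hk : k ≠ 0) (m t : ℤ) :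
    ∑ ℓ ∈ range k, cos (2 * π * ℓ * m / k) * cos (2 * π * ℓ * t / k) =
      k * ((if (k : ℤ) ∣ m + t then 1 else 0) + if (k : ℤ) ∣ m - t then 1 else 0) / 2 := by
  have hprod (ℓ : ℕ) : cos (2 * π * ℓ * m / k) * cos (2 * π * ℓ * t / k) =
      (cos (2 * π * ℓ * (m + t : ℤ) / k) + cos (2 * π * ℓ * (m - t : ℤ) / k)) / 2 := by
    have hadd : 2 * π * ℓ * ((m + t : ℤ) : ℝ) / k = 2 * π * ℓ * m / k + 2 * π * ℓ * t / k := by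
      push_cast; ring
    have hsub : 2 * π * ℓ * ((m - t : ℤ) : ℝ) / k = 2 * π * ℓ * m / k - 2 * π * ℓ * t / k := by
      push_cast; ring
    rw [hadd, hsub, cos_add, cos_sub]
    ring
  rw [sum_congr rfl fun ℓ _ => hprod ℓ, ← sum_div, sum_add_distrib,
    sum_range_cos_two_pi_mul_div hk, sum_range_cos_two_pi_mul_div hk]
  split_ifs <;> ring

theorem cos_two_pi_mul_div_eq_of_dvd {k : ℕ} (hk : k ≠ 0) (j : ℕ) {m t : ℤ}
    (h : (k : ℤ) ∣ m - t ∨ (k : ℤ) ∣ m + t) :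
    cos (2 * π * j * m / k) = cos (2 * π * j * t / k) := by
  have hperiod (s q : ℤ) : cos (2 * π * j * (s + k * q : ℤ) / k) = cos (2 * π * j * s / k) := by
    have harg : 2 * π * j * ((s + k * q : ℤ) : ℝ) / k =
        2 * π * j * s / k + ((j * q : ℤ) : ℝ) * (2 * π) := by
      push_cast
      field_simp
    rw [harg, cos_add_int_mul_two_pi]
  obtain ⟨q, hq⟩ | ⟨q, hq⟩ := h
  · rw [show m = t + k * q by omega, hperiod]
  · rw [show m = -t + k * q by omega, hperiod, Int.cast_neg, mul_neg, neg_div, cos_neg]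

theorem Fin.dvd_val_sub_val_iff {k : ℕ} {x y : Fin k} :
    (k : ℤ) ∣ ((x : ℕ) - (y : ℕ) : ℤ) ↔ x = y := by
  refine ⟨fun h => Fin.ext ?_, fun h => by simp [h]⟩
  have := Int.eq_zero_of_abs_lt_dvd h (by rw [abs_lt]; omega)
  omega

theorem sum_fin_cos_two_pi_mul_div {k : ℕ} (hk : k ≠ 0) (j : ℕ) :
    ∑ x : Fin k, cos (2 * π * j * (x : ℕ) / k) = if k ∣ j then (k : ℝ) else 0 := by
  have h := sum_range_cos_two_pi_mul_div hk j
  simp only [Int.natCast_dvd_natCast, Int.cast_natCast] at h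
  rw [Fin.sum_univ_eq_sum_range (fun x => cos (2 * π * j * x / k)), ← h]
  refine sum_congr rfl fun x _ => ?_
  ring_nf

theorem sum_fin_sin_two_pi_mul_div {k : ℕ} (hk : k ≠ 0) (j : ℕ) :
    ∑ x : Fin k, sin (2 * π * j * (x : ℕ) / k) = 0 := by
  rw [Fin.sum_univ_eq_sum_range (fun x => sin (2 * π * j * x / k)),
    ← sum_range_sin_two_pi_mul_div hk j]
  refine sum_congr rfl fun x _ => ?_
  push_cast
  ring_nf

section CosineKernel

open Matrix

variable {ι n : Type*}

def cosineKernel (s : Finset ι) (c : ι → ℝ) (θ : ι → n → ℝ) : Matrix n n ℝ :=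
  Matrix.of fun x y => ∑ j ∈ s, c j * cos (θ j x - θ j y)

variable [Fintype n]

theorem posSemidef_cosineKernel {s : Finset ι} {c : ι → ℝ} (hc : ∀ j ∈ s, 0 ≤ c j)
    (θ : ι → n → ℝ) : (cosineKernel s c θ).PosSemidef := by
  have hdecomp : cosineKernel s c θ = ∑ j ∈ s, c j •
      (vecMulVec (cos ∘ θ j) (star (cos ∘ θ j)) + vecMulVec (sin ∘ θ j) (star (sin ∘ θ j))) := by
    ext x y
    simp [cosineKernel, Matrix.sum_apply, vecMulVec_apply, cos_sub, mul_add, sum_add_distrib]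
  rw [hdecomp]
  exact posSemidef_sum s fun j hj =>
    ((posSemidef_vecMulVec_self_star _).add (posSemidef_vecMulVec_self_star _)).smul (hc j hj)

theorem sum_sum_cosineKernel (s : Finset ι) (c : ι → ℝ) (θ : ι → n → ℝ) :
    ∑ x, ∑ y, cosineKernel s c θ x y =
      ∑ j ∈ s, c j * ((∑ x, cos (θ j x)) ^ 2 + (∑ x, sin (θ j x)) ^ 2) := by
  have hcomm (j : ι) : ∑ x, ∑ y, cos (θ j x - θ j y) =
      (∑ x, cos (θ j x)) ^ 2 + (∑ x, sin (θ j x)) ^ 2 := by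
    simp only [cos_sub, sq, sum_mul_sum, ← sum_add_distrib]
  simp only [cosineKernel, of_apply, ← hcomm, mul_sum]
  calc _ = ∑ x, ∑ j ∈ s, ∑ y, c j * cos (θ j x - θ j y) := sum_congr rfl fun _ _ => sum_comm
    _ = _ := sum_comm

theorem Matrix.PosSemidef.sum_sum_mul_cos_sub_nonneg {B : Matrix n n ℝ} (hB : B.PosSemidef)
    (θ : n → ℝ) : 0 ≤ ∑ x, ∑ y, B x y * cos (θ x - θ y) := by
  have hquad (v : n → ℝ) : star v ⬝ᵥ (B *ᵥ v) = ∑ x, ∑ y, B x y * (v x * v y) := by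
    simp only [dotProduct, mulVec, star_trivial, mul_sum]
    exact sum_congr rfl fun x _ => sum_congr rfl fun y _ => by ring
  have h := add_nonneg (hB.dotProduct_mulVec_nonneg (cos ∘ θ))
    (hB.dotProduct_mulVec_nonneg (sin ∘ θ))
  simpa only [hquad, ← sum_add_distrib, ← mul_add, Function.comp_apply, ← cos_sub] using h

end CosineKernel

section Fold

variable {M : Type*}

/-- Merges the frequencies `j` and `k - j`; `0` and, for even `k`, `k / 2` are their own
partners. -/
def foldHalf [AddCommMonoid M] (k : ℕ) (g : ℕ → M) (j : ℕ) : M :=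
  g j + if j = 0 ∨ 2 * j = k then 0 else g (k - j)

theorem sum_range_eq_sum_foldHalf [AddCommMonoid M] {k : ℕ} (hk : k ≠ 0) (g : ℕ → M) :
    ∑ ℓ ∈ range k, g ℓ = ∑ j ∈ range (k / 2 + 1), foldHalf k g j := by
  have hsplit : range k = range (k / 2 + 1) ∪ Ico (k / 2 + 1) k := by
    rw [range_eq_Ico, range_eq_Ico, Ico_union_Ico_eq_Ico] <;> omega
  have hdisj : Disjoint (range (k / 2 + 1)) (Ico (k / 2 + 1) k) := by
    rw [range_eq_Ico]; exact Ico_disjoint_Ico_consecutive _ _ _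
  have hreflect : ∑ ℓ ∈ Ico (k / 2 + 1) k, g ℓ =
      ∑ j ∈ (range (k / 2 + 1)).filter (fun j => ¬(j = 0 ∨ 2 * j = k)), g (k - j) := by
    refine sum_nbij' (k - ·) (k - ·) ?_ ?_ ?_ ?_ ?_ <;> intro a ha <;>
      simp only [mem_Ico, mem_filter, mem_range] at ha ⊢
    all_goals first | omega | rw [Nat.sub_sub_self (by omega)]
  rw [hsplit, sum_union hdisj, hreflect, sum_filter, ← sum_add_distrib]
  refine sum_congr rfl fun j _ => ?_
  unfold foldHalf
  split_ifs <;> simp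

theorem sum_range_mul_eq_sum_foldHalf_mul [Semiring M] {k : ℕ} (hk : k ≠ 0) (g c : ℕ → M)
    (hc : ∀ j ≤ k, c (k - j) = c j) :
    ∑ ℓ ∈ range k, g ℓ * c ℓ = ∑ j ∈ range (k / 2 + 1), foldHalf k g j * c j := by
  rw [sum_range_eq_sum_foldHalf hk]
  refine sum_congr rfl fun j hj => ?_
  have hjk : j ≤ k := by rw [mem_range] at hj; omega
  unfold foldHalf
  split_ifs <;> simp [add_mul, hc j hjk]

end Fold

section CircularGraph

variable {k d : ℕ}

theorem circularCompleteGraph_compl_adj_of_dvd (hdk : d ≤ k) {x y : Fin k} {t : ℕ}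
    (ht₁ : 1 ≤ t) (ht : t ≤ d - 1)
    (h : (k : ℤ) ∣ ((x : ℕ) - (y : ℕ) : ℤ) - t ∨ (k : ℤ) ∣ ((x : ℕ) - (y : ℕ) : ℤ) + t) :
    (circularCompleteGraph k d)ᶜ.Adj x y := by
  have hx := x.isLt
  have hy := y.isLt
  simp only [SimpleGraph.compl_adj, circularCompleteGraph, ne_eq, not_and, not_le, Fin.ext_iff,
    le_abs, lt_abs]
  obtain ⟨q, hq⟩ | ⟨q, hq⟩ := h
  · have hb : -2 * (k : ℤ) < k * q ∧ k * q < k := by omega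
    have : -2 < q := by nlinarith
    have : q < 1 := by nlinarith
    obtain rfl | rfl : q = -1 ∨ q = 0 := by omega
    all_goals omega
  · have hb : -(k : ℤ) < k * q ∧ k * q < 2 * k := by omega
    have : -1 < q := by nlinarith
    have : q < 2 := by nlinarith
    obtain rfl | rfl : q = 0 ∨ q = 1 := by omega
    all_goals omega

theorem exists_dvd_of_circularCompleteGraph_compl_adj {x y : Fin k}
    (h : (circularCompleteGraph k d)ᶜ.Adj x y) :
    ∃ t : ℕ, 1 ≤ t ∧ t ≤ d - 1 ∧
      ((k : ℤ) ∣ ((x : ℕ) - (y : ℕ) : ℤ) - t ∨ (k : ℤ) ∣ ((x : ℕ) - (y : ℕ) : ℤ) + t) := by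
  have hx := x.isLt
  have hy := y.isLt
  simp only [SimpleGraph.compl_adj, circularCompleteGraph, ne_eq, not_and, not_le, Fin.ext_iff,
    le_abs, lt_abs] at h
  obtain ⟨hne, hfar⟩ := h
  by_cases hpos : (y : ℕ) < x
  · by_cases hnear : (x : ℕ) - y < d
    · exact ⟨x - y, by omega, by omega, .inl ⟨0, by omega⟩⟩
    · exact ⟨k - (x - y), by omega, by omega, .inr ⟨1, by omega⟩⟩
  · by_cases hnear : (y : ℕ) - x < d
    · exact ⟨y - x, by omega, by omega, .inr ⟨0, by omega⟩⟩
    · exact ⟨k - (y - x), by omega, by omega, .inl ⟨-1, by omega⟩⟩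

end CircularGraph

section CircularFourier

variable {k : ℕ}

def circularFourierCoeff (B : Matrix (Fin k) (Fin k) ℝ) (ℓ : ℕ) : ℝ :=
  (∑ x, ∑ y, B x y * cos (2 * π * ℓ * (x : ℕ) / k - 2 * π * ℓ * (y : ℕ) / k)) / k

theorem circularFourierCoeff_nonneg {B : Matrix (Fin k) (Fin k) ℝ} (hB : B.PosSemidef) (ℓ : ℕ) :
    0 ≤ circularFourierCoeff B ℓ :=
  div_nonneg (hB.sum_sum_mul_cos_sub_nonneg fun x => 2 * π * ℓ * (x : ℕ) / k) k.cast_nonneg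

theorem circularFourierCoeff_zero (B : Matrix (Fin k) (Fin k) ℝ) :
    circularFourierCoeff B 0 = (∑ x, ∑ y, B x y) / k := by
  simp [circularFourierCoeff]

theorem sum_circularFourierCoeff_mul_cos (hk : k ≠ 0) (B : Matrix (Fin k) (Fin k) ℝ) (t : ℤ) :
    ∑ ℓ ∈ range k, circularFourierCoeff B ℓ * cos (2 * π * ℓ * t / k) =
      ∑ x, ∑ y, B x y * ((if (k : ℤ) ∣ ((x : ℕ) - (y : ℕ) : ℤ) + t then 1 else 0) +
        (if (k : ℤ) ∣ ((x : ℕ) - (y : ℕ) : ℤ) - t then 1 else 0)) / 2 := by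
  have hdiff (x y : Fin k) (ℓ : ℕ) : 2 * π * ℓ * (x : ℕ) / k - 2 * π * ℓ * (y : ℕ) / k =
      2 * π * ℓ * (((x : ℕ) - (y : ℕ) : ℤ) : ℝ) / k := by
    push_cast; ring
  simp only [circularFourierCoeff, hdiff, sum_div, sum_mul]
  rw [sum_comm]
  refine sum_congr rfl fun x _ => ?_
  rw [sum_comm]
  refine sum_congr rfl fun y _ => ?_
  calc
    _ = B x y * (∑ ℓ ∈ range k,
          cos (2 * π * ℓ * (((x : ℕ) - (y : ℕ) : ℤ) : ℝ) / k) * cos (2 * π * ℓ * t / k)) / k := by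
      rw [mul_sum, sum_div]
      exact sum_congr rfl fun ℓ _ => by ring
    _ = _ := by
      rw [sum_range_cos_mul_cos_two_pi_mul_div hk]
      field_simp

theorem sum_circularFourierCoeff (hk : k ≠ 0) (B : Matrix (Fin k) (Fin k) ℝ) :
    ∑ ℓ ∈ range k, circularFourierCoeff B ℓ = ∑ x, B x x := by
  have h := sum_circularFourierCoeff_mul_cos hk B 0
  simp only [Int.cast_zero, mul_zero, zero_div, cos_zero, mul_one, add_zero, sub_zero,
    Fin.dvd_val_sub_val_iff] at h
  rw [h]
  refine sum_congr rfl fun x _ => ?_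
  rw [sum_eq_single x (fun y _ hyx => by simp [hyx.symm]) (by simp)]
  norm_num

theorem sum_circularFourierCoeff_mul_cos_eq_zero (hk : k ≠ 0) {B : Matrix (Fin k) (Fin k) ℝ}
    (t : ℕ) (hB : ∀ x y : Fin k, (k : ℤ) ∣ ((x : ℕ) - (y : ℕ) : ℤ) - t ∨
      (k : ℤ) ∣ ((x : ℕ) - (y : ℕ) : ℤ) + t → B x y = 0) :
    ∑ ℓ ∈ range k, circularFourierCoeff B ℓ * cos (2 * π * ℓ * t / k) = 0 := by
  have h := sum_circularFourierCoeff_mul_cos hk B t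
  rw [Int.cast_natCast] at h
  rw [h]
  refine sum_eq_zero fun x _ => sum_eq_zero fun y _ => ?_
  by_cases hxy : (k : ℤ) ∣ ((x : ℕ) - (y : ℕ) : ℤ) - t ∨ (k : ℤ) ∣ ((x : ℕ) - (y : ℕ) : ℤ) + t
  · simp [hB x y hxy]
  · rw [not_or] at hxy
    simp [hxy.1, hxy.2]

end CircularFourier

theorem exists_circularLP_of_thetaMatrix {k d : ℕ} (hk : k ≠ 0) (hdk : d ≤ k)
    {B : Matrix (Fin k) (Fin k) ℝ} (hB : B.PosSemidef) (htr : ∑ x, B x x = 1)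
    (hE : ∀ x y, (circularCompleteGraph k d)ᶜ.Adj x y → B x y = 0) :
    ∃ f : ℕ → ℝ, (∀ j, j ≤ k / 2 → 0 ≤ f j) ∧ ∑ j ∈ range (k / 2 + 1), f j = 1 ∧
      (∀ ℓ : ℕ, 1 ≤ ℓ → ℓ ≤ d - 1 →
        ∑ j ∈ range (k / 2 + 1), f j * cos (2 * j * ℓ * π / k) = 0) ∧
      ∑ x, ∑ y, B x y = k * f 0 := by
  have hfourier := circularFourierCoeff_nonneg hB
  refine ⟨foldHalf k (circularFourierCoeff B), fun j _ => ?_, ?_, fun t ht₁ ht => ?_, ?_⟩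
  · refine add_nonneg (hfourier j) ?_
    split_ifs
    exacts [le_rfl, hfourier _]
  · rw [← sum_range_eq_sum_foldHalf hk, sum_circularFourierCoeff hk, htr]
  · have hreflect : ∀ j ≤ k, cos (2 * π * (k - j : ℕ) * t / k) = cos (2 * π * j * t / k) := by
      intro j hj
      have h := cos_two_pi_mul_div_eq_of_dvd hk t (m := (k - j : ℕ)) (t := j) (.inr ⟨1, by omega⟩)
      push_cast at h ⊢
      rw [mul_right_comm _ _ (t : ℝ), h, mul_right_comm]
    have h := sum_circularFourierCoeff_mul_cos_eq_zero hk t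
      fun x y hxy => hE x y (circularCompleteGraph_compl_adj_of_dvd hdk ht₁ ht hxy)
    rw [sum_range_mul_eq_sum_foldHalf_mul hk _ _ hreflect] at h
    rw [← h]
    refine sum_congr rfl fun j _ => ?_
    ring_nf
  · simp only [foldHalf, true_or, if_true, add_zero, circularFourierCoeff_zero]
    field_simp

theorem exists_thetaMatrix_of_circularLP {k d : ℕ} (hk : k ≠ 0) {f : ℕ → ℝ}
    (hf : ∀ j, j ≤ k / 2 → 0 ≤ f j) (hsum : ∑ j ∈ range (k / 2 + 1), f j = 1)
    (hcos : ∀ ℓ : ℕ, 1 ≤ ℓ → ℓ ≤ d - 1 →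
      ∑ j ∈ range (k / 2 + 1), f j * cos (2 * j * ℓ * π / k) = 0) :
    ∃ B : Matrix (Fin k) (Fin k) ℝ, B.PosSemidef ∧ ∑ x, B x x = 1 ∧
      (∀ x y, (circularCompleteGraph k d)ᶜ.Adj x y → B x y = 0) ∧
      (k : ℝ) * f 0 = ∑ x, ∑ y, B x y := by
  refine ⟨cosineKernel (range (k / 2 + 1)) (fun j => f j / k) fun j x => 2 * π * j * (x : ℕ) / k,
    posSemidef_cosineKernel (fun j hj => div_nonneg (hf j ?_) k.cast_nonneg) _, ?_,
    fun x y hxy => ?_, ?_⟩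
  · rw [mem_range] at hj
    omega
  · simp only [cosineKernel, Matrix.of_apply, sub_self, cos_zero, mul_one, ← sum_div, hsum]
    simp [hk]
  · obtain ⟨t, ht₁, ht, hdvd⟩ := exists_dvd_of_circularCompleteGraph_compl_adj hxy
    have hdiff (j : ℕ) : 2 * π * j * (x : ℕ) / k - 2 * π * j * (y : ℕ) / k =
        2 * π * j * (((x : ℕ) - (y : ℕ) : ℤ) : ℝ) / k := by
      push_cast; ring
    simp only [cosineKernel, Matrix.of_apply, hdiff, cos_two_pi_mul_div_eq_of_dvd hk _ hdvd,
      Int.cast_natCast, div_mul_eq_mul_div, ← sum_div]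
    rw [div_eq_zero_iff, ← hcos t ht₁ ht]
    exact .inl (sum_congr rfl fun j _ => by ring_nf)
  · rw [sum_sum_cosineKernel, sum_eq_single 0]
    · simp
      field_simp
    · intro j hj hj0
      rw [mem_range] at hj
      rw [sum_fin_cos_two_pi_mul_div hk, sum_fin_sin_two_pi_mul_div hk,
        if_neg (fun hdvd => hj0 (Nat.eq_zero_of_dvd_of_lt hdvd (by omega)))]
      simp
    · simp

/-- The theta number of the complement of `K_{k/d}` as the optimal value of a linear
program (primal form). -/
theorem theta_circular_LP (k d : ℕ) (hd : 1 ≤ d) (hk : 2 * d ≤ k)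
    (k₀ : ℕ) (hk₀ : k₀ = k / 2) :
    lovaszTheta (circularCompleteGraph k d)ᶜ =
      sSup {r : ℝ | ∃ f : ℕ → ℝ, (∀ j, j ≤ k₀ → 0 ≤ f j) ∧
        (∑ j ∈ Finset.range (k₀ + 1), f j) = 1 ∧
        (∀ ℓ : ℕ, 1 ≤ ℓ → ℓ ≤ d - 1 →
          ∑ j ∈ Finset.range (k₀ + 1), f j * Real.cos (2 * j * ℓ * Real.pi / k) = 0) ∧
        r = k * f 0} := by
  subst hk₀
  have hk0 : k ≠ 0 := by omega
  unfold lovaszTheta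
  congr 1
  ext r
  constructor
  · rintro ⟨B, hB, htr, hE, rfl⟩
    exact exists_circularLP_of_thetaMatrix hk0 (by omega) hB htr hE
  · rintro ⟨f, hf, hsum, hcos, rfl⟩
    exact exists_thetaMatrix_of_circularLP hk0 hf hsum hcos
end
end

section
/- Let d ≥ 2 and k ≥ 2d be integers with gcd(k,d) = 1, let a_n = cos(⌊nk/d⌋·2π/k) for 0 ≤ n ≤ d−1, let L_n(y) = ∏_{s≠n} (y − a_s)/(a_n − a_s) be the associated Lagrange polynomials, and write L_n = Σ_{ℓ=0}^{d−1} λ_{n,ℓ} T_ℓ in the Chebyshev basis. Then the d-tuples (λ_{0,0}, λ_{1,0}, …, λ_{d−1,0}) and (λ_{0,0}, λ_{0,1}, …, λ_{0,d−1}) are equal up to a permutation of their coordinates; that is, there is a permutation π of {0, …, d−1} with λ_{n,0} = λ_{0,π(n)} for all n. -/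
open Real Polynomial Finset

noncomputable section

/-!
Write `θ = 2π/k`, `M n = ⌊nk/d⌋` and `r n = nk mod d`, so that `a_m = cos (M m θ)` and
`T_{r p}(a_m) = cos (r p · M m · θ)`. From `d · M n + r n = n k` we get `r n ≡ -d · M n (mod k)`, hence
`r p · M m ≡ r m · M p (mod k)`: the Chebyshev evaluation matrix `A ℓ m = T_ℓ(a_m)` satisfies
`A (r p) m = A (r m) p`. Since `gcd(k, d) = 1`, `r` permutes `{0, …, d-1}`, so transposing `A` only
permutes its rows and columns; the same then holds for `A⁻¹`, which is the matrix `(λ_{n,ℓ})` of the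
Lagrange polynomials. At `ℓ = 0 = r 0` this reads `λ_{n,0} = λ_{0, r n}`.
-/

open scoped Matrix

theorem Lagrange.basis_coeff_mul_eval_eq_one {F : Type*} [Field F] {d : ℕ} {v : ℕ → F}
    (hv : Set.InjOn v (Set.Iio d)) (P : ℕ → F[X]) (lam : ℕ → ℕ → F)
    (hlam : ∀ n ∈ range d, Lagrange.basis (range d) v n = ∑ ℓ ∈ range d, C (lam n ℓ) * P ℓ) :
    (Matrix.of fun n ℓ : Fin d => lam n ℓ) * Matrix.of (fun ℓ m : Fin d => (P ℓ).eval (v m))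
      = 1 := by
  ext n m
  have hn : (n : ℕ) ∈ range d := mem_range.2 n.isLt
  have hm : (m : ℕ) ∈ range d := mem_range.2 m.isLt
  rw [← coe_range] at hv
  calc _ = ∑ ℓ ∈ range d, lam n ℓ * (P ℓ).eval (v m) :=
        Fin.sum_univ_eq_sum_range (fun ℓ => lam n ℓ * (P ℓ).eval (v m)) d
    _ = (Lagrange.basis (range d) v n).eval (v m) := by
        simp only [hlam n hn, eval_finsetSum, eval_mul, eval_C]
    _ = (1 : Matrix (Fin d) (Fin d) F) n m := by
        rw [Matrix.one_apply]
        split_ifs with h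
        · rw [h]; exact Lagrange.eval_basis_self hv hm
        · exact Lagrange.eval_basis_of_ne (Fin.val_ne_of_ne h) hm

theorem Matrix.inv_apply_symm_apply_eq_of_apply_perm_symm {ι R : Type*} [Fintype ι]
    [DecidableEq ι] [CommRing R] {A : Matrix ι ι R} (e : Equiv.Perm ι)
    (hA : ∀ p m, A (e p) m = A (e m) p) (i j : ι) : A⁻¹ (e.symm j) (e i) = A⁻¹ i j := by
  have hAT : Aᵀ = A.submatrix e e.symm := by
    ext m q
    simpa using hA (e.symm q) m
  have hinvT : A⁻¹ᵀ = A⁻¹.submatrix e.symm e := by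
    rw [transpose_nonsing_inv, hAT, inv_submatrix_equiv]
  exact (congr_fun₂ hinvT j i).symm

theorem ZMod.natCast_mul_mod_eq_neg_mul_div (n k d : ℕ) :
    ((n * k % d : ℕ) : ZMod k) = -(d * (n * k / d : ℕ)) := by
  have h : ((d * (n * k / d) + n * k % d : ℕ) : ZMod k) = (n * k : ℕ) :=
    congrArg _ (Nat.div_add_mod (n * k) d)
  push_cast [ZMod.natCast_self] at h
  linear_combination h

theorem Real.Angle.coe_int_mul_two_pi_div_eq_iff {k : ℕ} (hk : k ≠ 0) (x y : ℤ) :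
    ((x * (2 * π / k) : ℝ) : Angle) = (y * (2 * π / k) : ℝ) ↔ (x : ZMod k) = y := by
  rw [Angle.angle_eq_iff_two_pi_dvd_sub, ZMod.intCast_eq_intCast_iff_dvd_sub, dvd_sub_comm]
  have hkR : (k : ℝ) ≠ 0 := by exact_mod_cast hk
  refine exists_congr fun t => ?_
  rw [← sub_mul, div_eq_mul_inv, ← mul_assoc, mul_comm _ (2 * π), mul_assoc,
    mul_right_inj' (by positivity), ← div_eq_mul_inv, div_eq_iff hkR, mul_comm]
  norm_cast

theorem Real.cos_int_mul_two_pi_div_eq_iff {k : ℕ} (hk : k ≠ 0) (x y : ℤ) :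
    cos (x * (2 * π / k)) = cos (y * (2 * π / k)) ↔
      (x : ZMod k) = y ∨ (x : ZMod k) = -y := by
  rw [← Angle.cos_coe, ← Angle.cos_coe, Angle.cos_eq_iff_eq_or_eq_neg, ← Angle.coe_neg, ← neg_mul,
    ← Int.cast_neg, Angle.coe_int_mul_two_pi_div_eq_iff hk,
    Angle.coe_int_mul_two_pi_div_eq_iff hk, Int.cast_neg]

theorem Nat.mul_mod_injOn {k d : ℕ} (hcop : k.Coprime d) :
    Set.InjOn (fun n => n * k % d) (Set.Iio d) :=
  fun _ hm _ hn h => (Nat.ModEq.cancel_right_of_coprime hcop.symm h).eq_of_lt_of_lt hm hn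

def mulModPerm {k d : ℕ} (hcop : k.Coprime d) : Equiv.Perm (Fin d) :=
  Equiv.ofBijective (fun n => ⟨n * k % d, Nat.mod_lt _ n.pos⟩)
    (Finite.injective_iff_bijective.mp fun m n h =>
      Fin.ext (Nat.mul_mod_injOn hcop m.isLt n.isLt (congrArg Fin.val h)))

@[simp]
theorem mulModPerm_apply_val {k d : ℕ} (hcop : k.Coprime d) (n : Fin d) :
    (mulModPerm hcop n : ℕ) = n * k % d :=
  rfl

def circularNode (k d n : ℕ) : ℝ :=
  cos ((n * k / d : ℕ) * (2 * π / k))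

theorem circularNode_injOn {k d : ℕ} (hk : 2 * d ≤ k) (hcop : k.Coprime d) :
    Set.InjOn (circularNode k d) (Set.Iio d) := by
  intro m (hm : m < d) n (hn : n < d) h
  refine Nat.mul_mod_injOn hcop hm hn (show m * k % d = n * k % d from ?_)
  have hrm := ZMod.natCast_mul_mod_eq_neg_mul_div m k d
  have hrn := ZMod.natCast_mul_mod_eq_neg_mul_div n k d
  have hm' : m * k % d < d := Nat.mod_lt _ (by omega)
  have hn' : n * k % d < d := Nat.mod_lt _ (by omega)
  have hcos := (cos_int_mul_two_pi_div_eq_iff (k := k) (by omega) (m * k / d : ℕ)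
    (n * k / d : ℕ)).1 (by exact_mod_cast h)
  simp only [Int.cast_natCast] at hcos
  rcases hcos with hM | hM
  · have hr : ((m * k % d : ℕ) : ZMod k) = (n * k % d : ℕ) := by
      rw [hrm, hrn, hM]
    rwa [ZMod.natCast_eq_natCast_iff', Nat.mod_eq_of_lt (show m * k % d < k by omega),
      Nat.mod_eq_of_lt (show n * k % d < k by omega)] at hr
  · -- `k ∣ r m + r n < 2 d ≤ k`, so both residues vanish
    have hr : ((m * k % d + n * k % d : ℕ) : ZMod k) = 0 := by
      rw [Nat.cast_add]
      linear_combination hrm + hrn - d * hM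
    have := Nat.eq_zero_of_dvd_of_lt ((ZMod.natCast_eq_zero_iff _ _).1 hr) (by omega)
    omega

theorem chebyshev_T_eval_circularNode_symm {k : ℕ} (hk : k ≠ 0) (d p m : ℕ) :
    (Chebyshev.T ℝ (p * k % d : ℕ)).eval (circularNode k d m) =
      (Chebyshev.T ℝ (m * k % d : ℕ)).eval (circularNode k d p) := by
  simp only [circularNode, Chebyshev.T_real_cos, ← mul_assoc]
  have h := (cos_int_mul_two_pi_div_eq_iff hk (((p * k % d : ℕ) : ℤ) * (m * k / d : ℕ))
    (((m * k % d : ℕ) : ℤ) * (p * k / d : ℕ))).2 (Or.inl ?_)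
  · simpa only [Int.cast_mul, Int.cast_natCast] using h
  · simp only [Int.cast_mul, Int.cast_natCast]
    rw [ZMod.natCast_mul_mod_eq_neg_mul_div, ZMod.natCast_mul_mod_eq_neg_mul_div]
    ring

theorem lagrange_chebyshev_coeff_permutation_general (k d : ℕ) (hk : 2 * d ≤ k)
    (hcop : Nat.Coprime k d) (a : ℕ → ℝ)
    (ha : ∀ n, a n = Real.cos ((↑(n * k / d) : ℝ) * (2 * Real.pi / k)))
    (lam : ℕ → ℕ → ℝ)
    (hlam : ∀ n ∈ Finset.range d,
      (∏ s ∈ (Finset.range d).erase n,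
          Polynomial.C ((a n - a s)⁻¹) * (Polynomial.X - Polynomial.C (a s)))
        = ∑ ℓ ∈ Finset.range d,
            Polynomial.C (lam n ℓ) * Polynomial.Chebyshev.T ℝ (ℓ : ℤ)) :
    ∃ e : Equiv.Perm (Fin d), ∀ n : Fin d, lam n 0 = lam 0 (e n) := by
  obtain rfl : a = circularNode k d := funext ha
  let A : Matrix (Fin d) (Fin d) ℝ :=
    Matrix.of fun ℓ m => (Chebyshev.T ℝ ((ℓ : ℕ) : ℤ)).eval (circularNode k d m)
  have hAinv : A⁻¹ = Matrix.of fun n ℓ : Fin d => lam n ℓ :=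
    Matrix.inv_eq_left_inv
      (Lagrange.basis_coeff_mul_eval_eq_one (circularNode_injOn hk hcop) _ lam hlam)
  let e := mulModPerm hcop
  refine ⟨e, fun n => ?_⟩
  have he : e.symm ⟨0, n.pos⟩ = ⟨0, n.pos⟩ := by
    rw [Equiv.symm_apply_eq]
    ext
    simp [e]
  have hk0 : k ≠ 0 := by have := n.pos; omega
  have hsymm := Matrix.inv_apply_symm_apply_eq_of_apply_perm_symm (A := A) e
    (fun p m => chebyshev_T_eval_circularNode_symm hk0 d p m) n ⟨0, n.pos⟩
  rw [hAinv, he] at hsymm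
  exact hsymm.symm

/-- The tuple of `T_0`-coefficients `(λ_{n,0})_n` of the Lagrange polynomials in the
Chebyshev basis is a permutation of the tuple of Chebyshev coefficients
`(λ_{0,ℓ})_ℓ` of `L_0`. -/
theorem lagrange_chebyshev_coeff_permutation (k d : ℕ) (hd : 2 ≤ d) (hk : 2 * d ≤ k)
    (hcop : Nat.Coprime k d) (a : ℕ → ℝ)
    (ha : ∀ n, a n = Real.cos ((↑(n * k / d) : ℝ) * (2 * Real.pi / k)))
    (lam : ℕ → ℕ → ℝ)
    (hlam : ∀ n ∈ Finset.range d,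
      (∏ s ∈ (Finset.range d).erase n,
          Polynomial.C ((a n - a s)⁻¹) * (Polynomial.X - Polynomial.C (a s)))
        = ∑ ℓ ∈ Finset.range d,
            Polynomial.C (lam n ℓ) * Polynomial.Chebyshev.T ℝ (ℓ : ℤ)) :
    ∃ e : Equiv.Perm (Fin d), ∀ n : Fin d, lam n 0 = lam 0 (e n) :=
  lagrange_chebyshev_coeff_permutation_general k d hk hcop a ha lam hlam
end
end

section
/- Let d ≥ 2 and k ≥ 2d be integers with gcd(k,d) = 1, let a_n = cos(⌊nk/d⌋·2π/k) for 0 ≤ n ≤ d−1, and let L_0(y) = ∏_{s=1}^{d−1} (y − a_s)/(1 − a_s). Then L_0(1) = 1, and for every integer j with 1 ≤ j ≤ ⌊k/2⌋ one has L_0(cos(2jπ/k)) ≥ 0. -/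
open Real Polynomial Finset

noncomputable section

/-!
Write `q s = ⌊s k / d⌋`, so that `a s = cos (2π q s / k)`. Since `d ∤ s k` for `0 < s < d`,
`q s + q (d - s) = k - 1`, hence `a (d - s) = cos (2π (q s + 1) / k)`: the involution
`s ↦ d - s` pairs the nodes into cosines of consecutive multiples of `2π / k`. No point
`cos (2π j / k)` lies strictly between two such cosines, because
`(cos x - cos y) (cos x - cos z)` factors into two products of sines at consecutive multiples
of `π / k`, each of which is nonnegative. A self-paired node (`d = 2 s`, so `k = 2 q s + 1`) is
`cos (π - π / k)`, the least of the cosines. The denominators `1 - a s` are nonnegative, and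
nonzero as `0 < q s < k`.
-/

lemma Finset.prod_nonneg_of_involution {ι R : Type*} [DecidableEq ι] [CommSemiring R]
    [PartialOrder R] [IsOrderedRing R] {s : Finset ι} {g : ι → R} (σ : ι → ι)
    (hσ : ∀ x ∈ s, σ x ∈ s) (hσσ : ∀ x ∈ s, σ (σ x) = x)
    (hfix : ∀ x ∈ s, σ x = x → 0 ≤ g x) (hpair : ∀ x ∈ s, σ x ≠ x → 0 ≤ g x * g (σ x)) :
    0 ≤ ∏ x ∈ s, g x := by
  induction s using Finset.strongInduction with
  | H s ih =>
    have ih' : ∀ t ⊂ s, (∀ y ∈ t, σ y ∈ t) → 0 ≤ ∏ y ∈ t, g y := fun t ht hσt =>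
      ih t ht hσt (fun y hy => hσσ y (ht.subset hy)) (fun y hy => hfix y (ht.subset hy))
        (fun y hy => hpair y (ht.subset hy))
    obtain rfl | ⟨x, hx⟩ := s.eq_empty_or_nonempty
    · simp
    by_cases hfx : σ x = x
    · rw [← mul_prod_erase s g hx]
      refine mul_nonneg (hfix x hx hfx) (ih' _ (erase_ssubset hx) fun y hy => ?_)
      obtain ⟨hyx, hy⟩ := mem_erase.1 hy
      refine mem_erase.2 ⟨fun h => hyx ?_, hσ y hy⟩
      rw [← hσσ y hy, h, hfx]
    · have hσx : σ x ∈ s.erase x := mem_erase.2 ⟨hfx, hσ x hx⟩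
      rw [← mul_prod_erase s g hx, ← mul_prod_erase _ g hσx, ← mul_assoc]
      refine mul_nonneg (hpair x hx hfx)
        (ih' _ ((erase_ssubset hσx).trans (erase_ssubset hx)) fun y hy => ?_)
      obtain ⟨hyσx, hyx, hy⟩ := by simpa only [mem_erase] using hy
      simp only [mem_erase]
      refine ⟨fun h => hyx ?_, fun h => hyσx ?_, hσ y hy⟩
      · rw [← hσσ y hy, h, hσσ x hx]
      · rw [← hσσ y hy, h]

lemma Nat.div_add_div_add_one_of_dvd_add {a b c : ℕ} (h : c ∣ a + b) (ha : ¬c ∣ a) :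
    a / c + b / c + 1 = (a + b) / c := by
  have hc : 0 < c := Nat.pos_of_ne_zero fun hc => ha (by simp_all)
  exact (Nat.add_div_eq_of_le_mod_add_mod (Nat.le_mod_add_mod_of_dvd_add_of_not_dvd h ha) hc).symm

lemma Nat.Coprime.mul_div_add_sub_mul_div_add_one {k d s : ℕ} (hcop : k.Coprime d)
    (hs : 0 < s) (hsd : s < d) : s * k / d + (d - s) * k / d + 1 = k := by
  have hnd : ¬d ∣ s * k := fun h =>
    Nat.not_dvd_of_pos_of_lt hs hsd (hcop.symm.dvd_of_dvd_mul_right h)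
  have hsum : s * k + (d - s) * k = d * k := by rw [← add_mul, Nat.add_sub_cancel' hsd.le]
  rw [Nat.div_add_div_add_one_of_dvd_add (hsum ▸ Nat.dvd_mul_right d k) hnd, hsum,
    Nat.mul_div_cancel_left k (hs.trans hsd)]

lemma Real.sin_mul_sin_add_one_nonneg (k : ℕ) (t : ℤ) :
    0 ≤ sin (t * π / k) * sin ((t + 1) * π / k) := by
  rcases Nat.eq_zero_or_pos k with rfl | hk
  · simp
  have hk' : (0 : ℝ) < k := by exact_mod_cast hk
  obtain ⟨q, r, hr0, hrk, rfl⟩ : ∃ q r : ℤ, 0 ≤ r ∧ r < k ∧ t = r + q * k :=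
    ⟨t / k, t % k, Int.emod_nonneg t (by omega), Int.emod_lt_of_pos t (by omega),
      (Int.emod_add_ediv_mul t k).symm⟩
  have hshift (x : ℝ) : (x + q * k) * π / k = x * π / k + q * π := by field_simp
  -- both sines pick up the same sign `(-1) ^ q`
  push_cast
  rw [add_right_comm, hshift, hshift, sin_add_int_mul_pi, sin_add_int_mul_pi,
    mul_mul_mul_comm, ← mul_zpow, neg_one_mul, neg_neg, one_zpow, one_mul]
  have hr0' : (0 : ℝ) ≤ r := by exact_mod_cast hr0
  have hrk' : (r : ℝ) + 1 ≤ k := by exact_mod_cast hrk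
  apply mul_nonneg <;> apply sin_nonneg_of_nonneg_of_le_pi
  · positivity
  · rw [div_le_iff₀ hk']; nlinarith [pi_pos]
  · positivity
  · rw [div_le_iff₀ hk']; nlinarith [pi_pos]

lemma Real.cos_sub_cos_mul_cos_sub_cos_add_one_nonneg (k : ℕ) (j m : ℤ) :
    0 ≤ (cos (j * (2 * π / k)) - cos (m * (2 * π / k))) *
      (cos (j * (2 * π / k)) - cos ((m + 1) * (2 * π / k))) := by
  have h₁ := sin_mul_sin_add_one_nonneg k (j + m)
  have h₂ := sin_mul_sin_add_one_nonneg k (j - m - 1)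
  push_cast at h₁ h₂
  have e₁ : (j * (2 * π / k) + m * (2 * π / k)) / 2 = (j + m) * π / k := by ring
  have e₂ : (j * (2 * π / k) - m * (2 * π / k)) / 2 = (j - m - 1 + 1) * π / k := by ring
  have e₃ : (j * (2 * π / k) + (m + 1) * (2 * π / k)) / 2 = (j + m + 1) * π / k := by ring
  have e₄ : (j * (2 * π / k) - (m + 1) * (2 * π / k)) / 2 = (j - m - 1) * π / k := by ring
  rw [cos_sub_cos, cos_sub_cos, e₁, e₂, e₃, e₄]
  nlinarith [mul_nonneg h₁ h₂]

lemma Real.cos_sub_cos_nonneg_of_two_mul_add_one_eq {k m : ℕ} (hkm : 2 * m + 1 = k)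
    (j : ℤ) :
    0 ≤ cos (j * (2 * π / k)) - cos (m * (2 * π / k)) := by
  have hk : (k : ℝ) = 2 * m + 1 := by exact_mod_cast hkm.symm
  have h := sin_mul_sin_add_one_nonneg k (j + m)
  push_cast at h
  have e₁ : (j * (2 * π / k) + m * (2 * π / k)) / 2 = (j + m) * π / k := by ring
  have e₂ : (j * (2 * π / k) - m * (2 * π / k)) / 2 = (j + m + 1) * π / k - π := by
    rw [hk]; field_simp; ring
  rw [cos_sub_cos, e₁, e₂, sin_sub_pi]
  linarith

lemma Real.cos_mul_two_pi_div_of_add_eq {k m m' : ℕ} (h : m + m' = k) :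
    cos (m' * (2 * π / k)) = cos (m * (2 * π / k)) := by
  rcases Nat.eq_zero_or_pos k with rfl | hk
  · simp
  have hk' : (k : ℝ) = m + m' := by exact_mod_cast h.symm
  have : (m' : ℝ) * (2 * π / k) = 2 * π - m * (2 * π / k) := by
    field_simp; rw [hk']; ring
  rw [this, cos_two_pi_sub]

lemma Real.cos_mul_two_pi_div_ne_one {k q : ℕ} (hq : 0 < q) (hqk : q < k) :
    cos (q * (2 * π / k)) ≠ 1 := by
  have hk : (0 : ℝ) < k := by exact_mod_cast hq.trans hqk
  have hqk' : (q : ℝ) < k := by exact_mod_cast hqk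
  have hpos : 0 < q * (2 * π / k) := by positivity
  have hlt : q * (2 * π / k) < 2 * π := by
    rw [mul_div_assoc', div_lt_iff₀ hk]; nlinarith [pi_pos]
  rw [Ne, cos_eq_one_iff_of_lt_of_lt (by linarith [pi_pos]) hlt]
  exact hpos.ne'

theorem L0_nonneg_at_cos_general (k d : ℕ) (hk : 2 * d ≤ k)
    (hcop : Nat.Coprime k d) (a : ℕ → ℝ)
    (ha : ∀ n, a n = Real.cos ((↑(n * k / d) : ℝ) * (2 * Real.pi / k)))
    (L0 : ℝ → ℝ)
    (hL0 : ∀ y, L0 y = ∏ s ∈ Finset.Icc 1 (d - 1), ((y - a s) / (1 - a s))) :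
    L0 1 = 1 ∧ ∀ j : ℕ, 1 ≤ j → j ≤ k / 2 →
      0 ≤ L0 (Real.cos (2 * j * Real.pi / k)) := by
  have hmem (s : ℕ) (hs : s ∈ Icc 1 (d - 1)) : 0 < s ∧ s < d := by
    simp only [mem_Icc] at hs; omega
  have hpair (s : ℕ) (hs : s ∈ Icc 1 (d - 1)) : s * k / d + (d - s) * k / d + 1 = k :=
    hcop.mul_div_add_sub_mul_div_add_one (hmem s hs).1 (hmem s hs).2
  refine ⟨?_, fun j _ _ => ?_⟩
  · rw [hL0]
    refine prod_eq_one fun s hs => div_self (sub_ne_zero.2 (Ne.symm ?_))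
    obtain ⟨hs0, hsd⟩ := hmem s hs
    rw [ha]
    exact cos_mul_two_pi_div_ne_one
      (Nat.div_pos ((by omega : d ≤ k).trans (Nat.le_mul_of_pos_left k hs0)) (by omega))
      (Nat.div_lt_of_lt_mul (Nat.mul_lt_mul_of_pos_right hsd (by omega)))
  · have hy : cos (2 * j * π / k) = cos ((j : ℤ) * (2 * π / k)) := by
      push_cast; ring_nf
    have hden (s : ℕ) : 0 ≤ 1 - a s := sub_nonneg.2 ((ha s).symm ▸ cos_le_one _)
    rw [hL0, hy]
    refine prod_nonneg_of_involution (d - ·) (fun s hs => by simp only [mem_Icc] at hs ⊢; omega)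
      (fun s hs => by simp only [mem_Icc] at hs; omega) (fun s hs hfix => ?_) (fun s hs _ => ?_)
    · have hm := hpair s hs
      rw [hfix] at hm
      refine div_nonneg ?_ (hden s)
      rw [ha]
      exact_mod_cast cos_sub_cos_nonneg_of_two_mul_add_one_eq (by omega) j
    · have hm : s * k / d + 1 + (d - s) * k / d = k := by rw [add_right_comm]; exact hpair s hs
      rw [div_mul_div_comm]
      refine div_nonneg ?_ (mul_nonneg (hden _) (hden _))
      rw [ha, ha, cos_mul_two_pi_div_of_add_eq hm]
      exact_mod_cast cos_sub_cos_mul_cos_sub_cos_add_one_nonneg k j (s * k / d)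

/-- The Lagrange polynomial `L_0` satisfies `L_0(1) = 1` and is nonnegative at the points
`cos(2jπ/k)` for `1 ≤ j ≤ ⌊k/2⌋`. -/
theorem L0_nonneg_at_cos (k d : ℕ) (hd : 2 ≤ d) (hk : 2 * d ≤ k)
    (hcop : Nat.Coprime k d) (a : ℕ → ℝ)
    (ha : ∀ n, a n = Real.cos ((↑(n * k / d) : ℝ) * (2 * Real.pi / k)))
    (L0 : ℝ → ℝ)
    (hL0 : ∀ y, L0 y = ∏ s ∈ Finset.Icc 1 (d - 1), ((y - a s) / (1 - a s))) :
    L0 1 = 1 ∧ ∀ j : ℕ, 1 ≤ j → j ≤ k / 2 →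
      0 ≤ L0 (Real.cos (2 * j * Real.pi / k)) :=
  L0_nonneg_at_cos_general k d hk hcop a ha L0 hL0
end
end

section
/- Let d ≥ 2 be an integer and set c_i = cos(2iπ/d) for 0 ≤ i ≤ d−1 and σ_j = sin(2jπ/d). Then for every integer j with 1 ≤ j ≤ d−1: if 2j ≠ d, then ∏_{i=0, i ≠ j, i ≠ d−j}^{d−1} (c_j − c_i) = −d² / (2^d · σ_j²); and if 2j = d, then ∏_{i=0, i ≠ j}^{d−1} (c_j − c_i) = −d² / 2^{d−1}. -/
/-!
Put `ω = exp (2πi/d)` and `z_i = ω ^ i`, so that `c_i = (z_i + z_i⁻¹) / 2` and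
`c_j - c_i = -(z_j - z_i) (z_j⁻¹ - z_i) / (2 z_i)`. As the `z_i` are the roots of `X ^ d - 1`,
`∏_{i ≠ k} (z_k - z_i) = d z_k ^ (d - 1)` (the derivative at `z_k`) and `∏ z_i = (-1) ^ (d + 1)`
(the constant term). Since `z_{d-j} = z_j⁻¹`, the two products over `i ≠ j, d - j` are these
with the single factor `±(z_j - z_j⁻¹)` removed, and `(z_j - z_j⁻¹) ^ 2 = -4 σ_j ^ 2`. When
`2j = d`, `z_j = -1` and no factor needs removing.
-/

open Real Finset

namespace IsPrimitiveRoot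

variable {R : Type*} [CommRing R] [IsDomain R] {ζ : R} {n : ℕ}

open Polynomial in
theorem nodal_range_pow (hζ : IsPrimitiveRoot ζ n) (hn : 0 < n) :
    Lagrange.nodal (range n) (ζ ^ ·) = X ^ n - 1 := by
  simpa [Lagrange.nodal] using (X_pow_sub_C_eq_prod hζ hn (one_pow n)).symm

theorem prod_range_pow (hζ : IsPrimitiveRoot ζ n) (hn : 0 < n) :
    ∏ i ∈ range n, ζ ^ i = (-1) ^ (n + 1) := by
  have h := congrArg (Polynomial.eval 0) (hζ.nodal_range_pow hn)
  simp only [Lagrange.eval_nodal, zero_sub, prod_neg, card_range, Polynomial.eval_sub,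
    Polynomial.eval_pow, Polynomial.eval_X, Polynomial.eval_one, zero_pow hn.ne'] at h
  have hsq : ((-1 : R) ^ n) ^ 2 = 1 := by rw [← pow_mul, pow_mul']; simp
  linear_combination (-1) ^ n * h - (∏ i ∈ range n, ζ ^ i) * hsq

theorem prod_range_erase_pow_sub_pow (hζ : IsPrimitiveRoot ζ n) {k : ℕ} (hk : k < n) :
    ∏ i ∈ (range n).erase k, (ζ ^ k - ζ ^ i) = n * (ζ ^ k) ^ (n - 1) := by
  have h := Lagrange.eval_nodal_derivative_eval_node_eq (v := (ζ ^ ·)) (mem_range.2 hk)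
  rw [hζ.nodal_range_pow (by omega), Lagrange.eval_nodal] at h
  simpa [Polynomial.derivative_X_pow] using h.symm

end IsPrimitiveRoot

section Joukowski

variable {K : Type*} [Field K]

theorem half_add_inv_sub_half_add_inv {z w : K} (hz : z ≠ 0) (hw : w ≠ 0) :
    (z + z⁻¹) / 2 - (w + w⁻¹) / 2 = -((z - w) * (z⁻¹ - w) / w) / 2 := by
  rw [← sub_div]
  congr 1
  field_simp
  ring

theorem prod_half_add_inv_sub_half_add_inv {ι : Type*} (s : Finset ι) {z : K} (w : ι → K)
    (hz : z ≠ 0) (hw : ∀ i ∈ s, w i ≠ 0) :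
    ∏ i ∈ s, ((z + z⁻¹) / 2 - (w i + (w i)⁻¹) / 2) =
      (-1) ^ #s * (∏ i ∈ s, (z - w i)) * (∏ i ∈ s, (z⁻¹ - w i)) / (2 ^ #s * ∏ i ∈ s, w i) := by
  rw [prod_congr rfl fun i hi => half_add_inv_sub_half_add_inv hz (hw i hi)]
  simp only [prod_div_distrib, prod_neg, prod_mul_distrib, prod_const]
  ring

end Joukowski

namespace IsPrimitiveRoot

variable {K : Type*} [Field K] {ζ : K} {n : ℕ}

theorem pow_sub_eq_inv_pow (hζ : IsPrimitiveRoot ζ n) {j : ℕ} (hj : j ≤ n) :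
    ζ ^ (n - j) = (ζ ^ j)⁻¹ :=
  eq_inv_of_mul_eq_one_left (by rw [← pow_add, Nat.sub_add_cancel hj, hζ.pow_eq_one])

theorem prod_half_add_inv_sub_of_two_mul_ne (hζ : IsPrimitiveRoot ζ n) {j : ℕ} (hj0 : 0 < j)
    (hjn : j < n) (hj : 2 * j ≠ n) :
    ∏ i ∈ ((range n).erase j).erase (n - j),
        ((ζ ^ j + (ζ ^ j)⁻¹) / 2 - (ζ ^ i + (ζ ^ i)⁻¹) / 2) =
      n ^ 2 / (2 ^ (n - 2) * (ζ ^ j - (ζ ^ j)⁻¹) ^ 2) := by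
  obtain ⟨m, rfl⟩ : ∃ m, n = m + 2 := ⟨n - 2, by omega⟩
  set S := ((range (m + 2)).erase j).erase (m + 2 - j)
  set z := ζ ^ j
  have hζ0 : ζ ≠ 0 := hζ.ne_zero (by omega)
  have hz : z ≠ 0 := pow_ne_zero _ hζ0
  have hinv : ζ ^ (m + 2 - j) = z⁻¹ := hζ.pow_sub_eq_inv_pow hjn.le
  have hmem : m + 2 - j ∈ (range (m + 2)).erase j :=
    mem_erase.2 ⟨by omega, mem_range.2 (by omega)⟩
  have hmem' : j ∈ (range (m + 2)).erase (m + 2 - j) :=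
    mem_erase.2 ⟨by omega, mem_range.2 hjn⟩
  have hsub : z - z⁻¹ ≠ 0 := by
    rw [sub_ne_zero, ← hinv]
    exact fun h => hj (by have := hζ.pow_inj hjn (by omega) h; omega)
  have hP : (z - z⁻¹) * ∏ i ∈ S, (z - ζ ^ i) = (m + 2 : ℕ) * z ^ (m + 1) := by
    rw [← hinv, mul_prod_erase _ (z - ζ ^ ·) hmem, hζ.prod_range_erase_pow_sub_pow hjn]
    rfl
  have hQ : (z⁻¹ - z) * ∏ i ∈ S, (z⁻¹ - ζ ^ i) = (m + 2 : ℕ) * z⁻¹ ^ (m + 1) := by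
    rw [← hinv, show S = ((range (m + 2)).erase (m + 2 - j)).erase j from erase_right_comm,
      mul_prod_erase _ (ζ ^ (m + 2 - j) - ζ ^ ·) hmem',
      hζ.prod_range_erase_pow_sub_pow (by omega)]
    rfl
  have hR : z * (z⁻¹ * ∏ i ∈ S, ζ ^ i) = (-1) ^ (m + 3) := by
    rw [← hinv, mul_prod_erase _ (ζ ^ ·) hmem, mul_prod_erase _ (ζ ^ ·) (mem_range.2 hjn),
      hζ.prod_range_pow (by omega)]
  have hcard : #S = m := by
    rw [card_erase_of_mem hmem, card_erase_of_mem (mem_range.2 hjn), card_range]; omega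
  have hpow : z ^ (m + 1) * z⁻¹ ^ (m + 1) = 1 := by rw [← mul_pow, mul_inv_cancel₀ hz, one_pow]
  rw [mul_inv_cancel_left₀ hz] at hR
  rw [prod_half_add_inv_sub_half_add_inv S _ hz (fun i _ => pow_ne_zero _ hζ0), hcard, hR,
    mul_comm (2 ^ m : K), ← div_div, Nat.add_sub_cancel, mul_comm (2 ^ m : K), ← div_div]
  congr 1
  rw [div_eq_div_iff (by simp) (pow_ne_zero 2 hsub)]
  push_cast at hP hQ ⊢
  linear_combination (-1) ^ m * (-((z⁻¹ - z) * ∏ i ∈ S, (z⁻¹ - ζ ^ i)) * hP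
    - (m + 2 : K) * z ^ (m + 1) * hQ - (m + 2 : K) ^ 2 * hpow)

theorem prod_half_add_inv_sub_of_two_mul_eq (hζ : IsPrimitiveRoot ζ n) {j : ℕ} (hj0 : 0 < j)
    (hj : 2 * j = n) :
    ∏ i ∈ (range n).erase j, ((ζ ^ j + (ζ ^ j)⁻¹) / 2 - (ζ ^ i + (ζ ^ i)⁻¹) / 2) =
      -n ^ 2 / 2 ^ (n - 1) := by
  have hjn : j < n := by omega
  have hζ0 : ζ ≠ 0 := hζ.ne_zero (by omega)
  have hz : ζ ^ j = -1 := (hζ.pow (by omega) (by rw [← hj, mul_comm])).eq_neg_one_of_two_right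
  have hodd : (-1 : K) ^ (n - 1) = -1 := Odd.neg_one_pow ⟨j - 1, by omega⟩
  have hP : ∏ i ∈ (range n).erase j, (ζ ^ j - ζ ^ i) = -n := by
    rw [hζ.prod_range_erase_pow_sub_pow hjn, hz, hodd, mul_neg_one]
  have hR : ∏ i ∈ (range n).erase j, ζ ^ i = 1 := by
    have := mul_prod_erase _ (ζ ^ ·) (mem_range.2 hjn)
    rw [hζ.prod_range_pow (by omega), hz, pow_succ, Even.neg_one_pow ⟨j, by omega⟩] at this
    linear_combination -this
  rw [prod_half_add_inv_sub_half_add_inv _ _ (pow_ne_zero j hζ0) (fun i _ => pow_ne_zero i hζ0),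
    card_erase_of_mem (mem_range.2 hjn), card_range, hR]
  rw [hz] at hP
  rw [hz, inv_neg_one, hP, hodd]
  ring

end IsPrimitiveRoot

namespace Complex

theorem ofReal_cos_eq_half_add_inv (θ : ℝ) :
    (Real.cos θ : ℂ) = (exp (θ * I) + (exp (θ * I))⁻¹) / 2 := by
  rw [ofReal_cos, cos, ← exp_neg, neg_mul]

theorem ofReal_sin_eq_sub_inv_div (θ : ℝ) :
    (Real.sin θ : ℂ) = (exp (θ * I) - (exp (θ * I))⁻¹) / (2 * I) := by
  rw [ofReal_sin, sin, ← exp_neg, neg_mul, div_mul_eq_div_div_swap, div_I]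
  ring

theorem exp_two_pi_mul_I_div_pow (d i : ℕ) :
    exp (2 * π * I / d) ^ i = exp ((2 * i * π / d : ℝ) * I) := by
  rw [← exp_nat_mul]
  push_cast
  ring_nf

end Complex

/-- Products of differences of the cosines `c_i = cos(2iπ/d)`. -/
theorem prod_cos_diff (d : ℕ) (hd : 2 ≤ d) (c σ : ℕ → ℝ)
    (hc : ∀ i, c i = Real.cos (2 * i * Real.pi / d))
    (hσ : ∀ j, σ j = Real.sin (2 * j * Real.pi / d)) :
    ∀ j : ℕ, 1 ≤ j → j ≤ d - 1 →
      (2 * j ≠ d →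
        ∏ i ∈ ((Finset.range d).erase j).erase (d - j), (c j - c i) =
          -(d : ℝ) ^ 2 / (2 ^ d * (σ j) ^ 2)) ∧
      (2 * j = d →
        ∏ i ∈ (Finset.range d).erase j, (c j - c i) =
          -(d : ℝ) ^ 2 / 2 ^ (d - 1)) := by
  intro j hj1 hj2
  set ω := Complex.exp (2 * π * Complex.I / d)
  have hω : IsPrimitiveRoot ω d := Complex.isPrimitiveRoot_exp d (by omega)
  have hc' : ∀ i, (c i : ℂ) = (ω ^ i + (ω ^ i)⁻¹) / 2 := fun i => by
    rw [hc, Complex.exp_two_pi_mul_I_div_pow, Complex.ofReal_cos_eq_half_add_inv]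
  have hσ' : (σ j : ℂ) = (ω ^ j - (ω ^ j)⁻¹) / (2 * Complex.I) := by
    rw [hσ, Complex.exp_two_pi_mul_I_div_pow, Complex.ofReal_sin_eq_sub_inv_div]
  refine ⟨fun hjd => Complex.ofReal_injective ?_, fun hjd => Complex.ofReal_injective ?_⟩
  · push_cast
    simp_rw [hc']
    rw [hω.prod_half_add_inv_sub_of_two_mul_ne hj1 (by omega) hjd, hσ', div_pow, mul_pow,
      Complex.I_sq]
    obtain ⟨m, rfl⟩ : ∃ m, d = m + 2 := ⟨d - 2, by omega⟩
    rw [Nat.add_sub_cancel]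
    generalize ω ^ j - (ω ^ j)⁻¹ = x
    push_cast
    ring
  · push_cast
    simp_rw [hc']
    exact hω.prod_half_add_inv_sub_of_two_mul_eq hj1 hjd
end

section
/- For every integer d ≥ 2, Σ_{i=1}^{d−1} 1/(1 − cos(2iπ/d)) = (d² − 1)/6. -/
/-!
For a `d`-th root of unity `z = exp (iθ) ≠ 1`, the weighted geometric sum `A z = ∑_{j<d} j z^j`
equals `d / (z - 1)`, and `(z - 1)(z⁻¹ - 1) = 2 (1 - cos θ)`, so
`1 / (1 - cos θ) = 2 / d² · A z · A z⁻¹`. Summing over all `d`-th roots of unity, orthogonality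
(Parseval) gives `d ∑ j²`; removing the contribution `(∑ j)²` of `z = 1` leaves
`d ∑ j² - (∑ j)² = d² (d² - 1) / 12`.
-/

open Real Finset

section CommRing

variable {R : Type*} [CommRing R]

theorem sub_one_mul_sum_range_mul_pow (z : R) (n : ℕ) :
    (z - 1) * ∑ j ∈ range n, (j : R) * z ^ j = n * z ^ n - ∑ j ∈ range n, z ^ (j + 1) := by
  induction n with
  | zero => simp
  | succ n ih =>
    rw [sum_range_succ, sum_range_succ, mul_add, ih]
    push_cast
    ring

theorem two_mul_sum_range_natCast (n : ℕ) : 2 * ∑ j ∈ range n, (j : R) = n * (n - 1) := by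
  induction n with
  | zero => simp
  | succ n ih => rw [sum_range_succ, mul_add, ih]; push_cast; ring

theorem six_mul_sum_range_natCast_sq (n : ℕ) :
    6 * ∑ j ∈ range n, (j : R) ^ 2 = n * (n - 1) * (2 * n - 1) := by
  induction n with
  | zero => simp
  | succ n ih => rw [sum_range_succ, mul_add, ih]; push_cast; ring

theorem twelve_mul_natCast_mul_sum_range_sq_sub_sq_sum_range (n : ℕ) :
    12 * (n * ∑ j ∈ range n, (j : R) ^ 2 - (∑ j ∈ range n, (j : R)) ^ 2) =
      n ^ 2 * (n ^ 2 - 1) := by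
  linear_combination (2 * (n : R)) * six_mul_sum_range_natCast_sq (R := R) n -
    3 * (2 * ∑ j ∈ range n, (j : R) + n * (n - 1)) * two_mul_sum_range_natCast (R := R) n

end CommRing

section Field

variable {K : Type*} [Field K]

theorem sum_range_mul_pow_of_pow_eq_one {z : K} {n : ℕ} (hz : z ^ n = 1) (hz1 : z ≠ 1) :
    ∑ j ∈ range n, (j : K) * z ^ j = n / (z - 1) := by
  have hgeom : ∑ j ∈ range n, z ^ (j + 1) = 0 := by
    simp_rw [pow_succ, ← sum_mul, geom_sum_eq hz1 n, hz, sub_self, zero_div, zero_mul]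
  rw [eq_div_iff (sub_ne_zero.mpr hz1), mul_comm, sub_one_mul_sum_range_mul_pow, hgeom, hz]
  ring

namespace IsPrimitiveRoot

variable {ζ : K} {n : ℕ}

theorem sum_range_pow_mul_inv_pow (hζ : IsPrimitiveRoot ζ n) {j l : ℕ} (hj : j < n) (hl : l < n) :
    ∑ k ∈ range n, (ζ ^ j * ζ⁻¹ ^ l) ^ k = if j = l then (n : K) else 0 := by
  have hζ0 : ζ ≠ 0 := hζ.ne_zero (by omega)
  split_ifs with hjl
  · simp [hjl, mul_inv_cancel₀ (pow_ne_zero l hζ0)]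
  · have hw : ζ ^ j * ζ⁻¹ ^ l ≠ 1 := by
      rw [Ne, inv_pow, mul_inv_eq_one₀ (pow_ne_zero _ hζ0)]
      exact fun h => hjl (hζ.pow_inj hj hl h)
    rw [geom_sum_eq hw, mul_pow, ← pow_mul, ← pow_mul, mul_comm j, mul_comm l, pow_mul, pow_mul,
      inv_pow, hζ.pow_eq_one]
    simp

theorem sum_range_mul_sum_range_inv (hζ : IsPrimitiveRoot ζ n) (a : ℕ → K) :
    ∑ k ∈ range n, (∑ j ∈ range n, a j * (ζ ^ k) ^ j) * (∑ l ∈ range n, a l * (ζ⁻¹ ^ k) ^ l) =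
      n * ∑ j ∈ range n, a j ^ 2 := by
  have expand : ∀ k, (∑ j ∈ range n, a j * (ζ ^ k) ^ j) * (∑ l ∈ range n, a l * (ζ⁻¹ ^ k) ^ l) =
      ∑ j ∈ range n, ∑ l ∈ range n, a j * a l * (ζ ^ j * ζ⁻¹ ^ l) ^ k := fun k => by
    rw [sum_mul_sum]
    refine sum_congr rfl fun j _ => sum_congr rfl fun l _ => ?_
    rw [mul_pow, ← pow_mul, ← pow_mul, ← pow_mul, ← pow_mul, mul_comm j, mul_comm l]
    ring
  calc _ = ∑ j ∈ range n, ∑ l ∈ range n, a j * a l * ∑ k ∈ range n, (ζ ^ j * ζ⁻¹ ^ l) ^ k := by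
        simp_rw [expand, mul_sum]
        rw [sum_comm]
        exact sum_congr rfl fun _ _ => sum_comm
    _ = ∑ j ∈ range n, a j * a j * n := sum_congr rfl fun j hj => by
        rw [sum_congr rfl fun l hl => by
          rw [hζ.sum_range_pow_mul_inv_pow (mem_range.1 hj) (mem_range.1 hl)]]
        simp [hj]
    _ = n * ∑ j ∈ range n, a j ^ 2 := by
        rw [mul_sum]
        exact sum_congr rfl fun j _ => by ring

theorem sum_Icc_mul_sum_range_inv (hζ : IsPrimitiveRoot ζ n) (a : ℕ → K) :
    ∑ k ∈ Icc 1 (n - 1),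
        (∑ j ∈ range n, a j * (ζ ^ k) ^ j) * (∑ l ∈ range n, a l * (ζ⁻¹ ^ k) ^ l) =
      n * ∑ j ∈ range n, a j ^ 2 - (∑ j ∈ range n, a j) ^ 2 := by
  obtain rfl | hn := n.eq_zero_or_pos
  · simp
  have hIcc : Icc 1 (n - 1) = (range n).erase 0 := by ext k; simp; omega
  rw [hIcc, ← hζ.sum_range_mul_sum_range_inv, ← add_sum_erase _ _ (mem_range.2 hn)]
  simp [sq]

end IsPrimitiveRoot

theorem sum_range_mul_pow_mul_sum_range_mul_inv_pow {z : K} {n : ℕ} (hz : z ^ n = 1)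
    (hz1 : z ≠ 1) :
    (∑ j ∈ range n, (j : K) * z ^ j) * (∑ j ∈ range n, (j : K) * z⁻¹ ^ j) =
      n ^ 2 / ((z - 1) * (z⁻¹ - 1)) := by
  rw [sum_range_mul_pow_of_pow_eq_one hz hz1,
    sum_range_mul_pow_of_pow_eq_one (by rw [inv_pow, hz, inv_one]) (inv_ne_one.mpr hz1),
    div_mul_div_comm, sq]

end Field

theorem Complex.exp_mul_I_sub_one_mul_inv_sub_one (θ : ℝ) :
    (Complex.exp (θ * Complex.I) - 1) * ((Complex.exp (θ * Complex.I))⁻¹ - 1) =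
      2 * (1 - Real.cos θ) := by
  have hprod : Complex.exp (θ * Complex.I) * Complex.exp (-θ * Complex.I) = 1 := by
    rw [← Complex.exp_add, neg_mul, add_neg_cancel, Complex.exp_zero]
  rw [← Complex.exp_neg, ← neg_mul, Complex.ofReal_cos]
  linear_combination hprod + Complex.two_cos θ

theorem one_div_one_sub_cos_eq_of_exp_mul_I_pow_eq_one {θ : ℝ} {n : ℕ} (hn : n ≠ 0)
    (hz : Complex.exp (θ * Complex.I) ^ n = 1) (hz1 : Complex.exp (θ * Complex.I) ≠ 1) :
    ((1 / (1 - Real.cos θ) : ℝ) : ℂ) = 2 / n ^ 2 *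
      ((∑ j ∈ range n, (j : ℂ) * Complex.exp (θ * Complex.I) ^ j) *
        (∑ j ∈ range n, (j : ℂ) * (Complex.exp (θ * Complex.I))⁻¹ ^ j)) := by
  have hne : (Complex.exp (θ * Complex.I) - 1) * ((Complex.exp (θ * Complex.I))⁻¹ - 1) ≠ 0 :=
    mul_ne_zero (sub_ne_zero.mpr hz1) (sub_ne_zero.mpr (inv_ne_one.mpr hz1))
  rw [sum_range_mul_pow_mul_sum_range_mul_inv_pow hz hz1]
  rw [Complex.exp_mul_I_sub_one_mul_inv_sub_one] at hne ⊢
  have hn0 : (n : ℂ) ≠ 0 := Nat.cast_ne_zero.mpr hn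
  push_cast
  field_simp

/-- `Σ_{i=1}^{d−1} 1/(1 − cos(2iπ/d)) = (d² − 1)/6`. -/
theorem sum_one_div_one_sub_cos (d : ℕ) (hd : 2 ≤ d) :
    ∑ i ∈ Finset.Icc 1 (d - 1), 1 / (1 - Real.cos (2 * i * Real.pi / d)) =
      ((d : ℝ) ^ 2 - 1) / 6 := by
  set ζ : ℂ := Complex.exp (2 * π * Complex.I / d)
  have hζ : IsPrimitiveRoot ζ d := Complex.isPrimitiveRoot_exp d (by omega)
  set A : ℂ → ℂ := fun w => ∑ j ∈ range d, (j : ℂ) * w ^ j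
  have term : ∀ k ∈ Icc 1 (d - 1),
      ((1 / (1 - Real.cos (2 * k * π / d)) : ℝ) : ℂ) = 2 / d ^ 2 * (A (ζ ^ k) * A (ζ⁻¹ ^ k)) := by
    intro k hk
    have hk : k ≠ 0 ∧ k < d := by rw [mem_Icc] at hk; omega
    have hexp : ζ ^ k = Complex.exp ((2 * k * π / d : ℝ) * Complex.I) := by
      rw [← Complex.exp_nat_mul]; push_cast; ring_nf
    have hζk : ζ ^ k ≠ 1 := hζ.pow_ne_one_of_pos_of_lt hk.1 hk.2
    have hzd : (ζ ^ k) ^ d = 1 := by rw [← pow_mul, mul_comm, pow_mul, hζ.pow_eq_one, one_pow]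
    rw [hexp] at hζk hzd
    rw [inv_pow, hexp]
    exact one_div_one_sub_cos_eq_of_exp_mul_I_pow_eq_one (by omega) hzd hζk
  have variance := twelve_mul_natCast_mul_sum_range_sq_sub_sq_sum_range (R := ℂ) d
  apply Complex.ofReal_injective
  rw [Complex.ofReal_sum, sum_congr rfl term, ← mul_sum, hζ.sum_Icc_mul_sum_range_inv]
  have hd0 : (d : ℂ) ≠ 0 := Nat.cast_ne_zero.mpr (by omega)
  push_cast
  field_simp
  linear_combination variance
end

section
/- Let d ≥ 3 and k be integers with gcd(k,d) = 1 and k ≥ 4d³/π, and set a_i = cos(⌊ik/d⌋·2π/k) for 1 ≤ i ≤ d−1. Then ∏_{i=1}^{d−1} (1 − a_i) ≥ d²/2^d. -/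
/-!
Put `φᵢ = 2πi/d` and `ψᵢ = ⌊ik/d⌋·2π/k`, so that `aᵢ = cos ψᵢ` and `φᵢ - 2π/k ≤ ψᵢ ≤ φᵢ`.
Concavity of `sin` on `[0, π]` gives `sin (ψᵢ/2) ≥ (ψᵢ/φᵢ) sin (φᵢ/2)`, hence
`1 - aᵢ ≥ (1 - 2d/(ik)) (1 - cos φᵢ)`. Taking norms in `∏ (1 - ζⁱ) = d` for `ζ = exp (2πi/d)`
gives `∏ (1 - cos φᵢ) = d²/2^(d-1)`, and `∏ (1 - 2d/(ik)) ≥ 1 - ∑ 2d/(ik) ≥ 1/2` because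
`π d (d - 1) ≤ d³` turns `k ≥ 4d³/π` into `k ≥ 4d(d - 1)`.
-/

open Real Finset

lemma Real.one_sub_cos_eq_two_mul_sin_sq (x : ℝ) : 1 - cos x = 2 * sin (x / 2) ^ 2 := by
  rw [sin_sq_eq_half_sub, mul_div_cancel₀ x two_ne_zero]
  ring

lemma Real.one_sub_cos_eq_norm_exp_sub_one_sq (x : ℝ) :
    1 - cos x = ‖Complex.exp (Complex.I * x) - 1‖ ^ 2 / 2 := by
  rw [Complex.norm_exp_I_mul_ofReal_sub_one, Real.norm_eq_abs, sq_abs,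
    one_sub_cos_eq_two_mul_sin_sq]
  ring

theorem prod_one_sub_cos_mul_two_pi_div {n : ℕ} (hn : n ≠ 0) :
    ∏ i ∈ Icc 1 (n - 1), (1 - cos (i * (2 * π / n))) = (n : ℝ) ^ 2 / 2 ^ (n - 1) := by
  obtain ⟨m, rfl⟩ := Nat.exists_eq_add_one_of_ne_zero hn
  have hpow (i : ℕ) : Complex.exp (2 * π * Complex.I / (m + 1 : ℕ)) ^ i
      = Complex.exp (Complex.I * (i * (2 * π / (m + 1 : ℕ)) : ℝ)) := by
    rw [← Complex.exp_nat_mul]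
    push_cast
    ring_nf
  have hnorm := congrArg (‖·‖ ^ 2) (Complex.isPrimitiveRoot_exp _ hn).prod_one_sub_pow_eq_order
  simp only [norm_prod, ← prod_pow, norm_sub_rev (1 : ℂ), hpow] at hnorm
  rw [Nat.add_sub_cancel, ← Ico_add_one_right_eq_Icc, ← prod_Ico_add' _ 0 m 1, ← range_eq_Ico]
  simp only [one_sub_cos_eq_norm_exp_sub_one_sq, prod_div_distrib, prod_const, card_range]
  rw [hnorm]
  norm_cast

theorem Finset.one_sub_sum_le_prod_one_sub {ι R : Type*} [CommRing R] [LinearOrder R]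
    [IsStrictOrderedRing R] (s : Finset ι) {f : ι → R} (h0 : ∀ i ∈ s, 0 ≤ f i)
    (h1 : ∀ i ∈ s, f i ≤ 1) : 1 - ∑ i ∈ s, f i ≤ ∏ i ∈ s, (1 - f i) := by
  induction s using Finset.cons_induction with
  | empty => simp
  | cons a s _ ih =>
    simp only [forall_mem_cons] at h0 h1
    rw [prod_cons, sum_cons]
    have hs : 0 ≤ ∑ i ∈ s, f i := sum_nonneg h0.2
    nlinarith [mul_le_mul_of_nonneg_left (ih h0.2 h1.2) (sub_nonneg.2 h1.1), mul_nonneg h0.1 hs]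

lemma Real.mul_sin_le_sin_mul {t x : ℝ} (ht0 : 0 ≤ t) (ht1 : t ≤ 1) (hx0 : 0 ≤ x) (hxπ : x ≤ π) :
    t * sin x ≤ sin (t * x) := by
  simpa using strictConcaveOn_sin_Icc.concaveOn.2 ⟨le_rfl, pi_nonneg⟩ ⟨hx0, hxπ⟩
    (sub_nonneg.2 ht1) ht0 (sub_add_cancel 1 t)

lemma Real.one_sub_two_mul_div_mul_one_sub_cos_le {x y ε : ℝ} (hy : 0 ≤ y) (hyx : y ≤ x)
    (hx : x ≤ 2 * π) (hxy : x - ε ≤ y) : (1 - 2 * ε / x) * (1 - cos x) ≤ 1 - cos y := by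
  rcases (hy.trans hyx).eq_or_lt with rfl | hx0
  · simp [le_antisymm hyx hy]
  set t := y / x
  have ht0 : 0 ≤ t := div_nonneg hy hx0.le
  have ht1 : t ≤ 1 := div_le_one_of_le₀ hyx hx0.le
  have hsin : t * sin (x / 2) ≤ sin (y / 2) := by
    have := mul_sin_le_sin_mul ht0 ht1 (half_pos hx0).le (by linarith)
    rwa [mul_div_assoc', div_mul_cancel₀ y hx0.ne'] at this
  have hsin0 : 0 ≤ sin (x / 2) := sin_nonneg_of_nonneg_of_le_pi (by linarith) (by linarith)
  have hεt : 1 - ε / x ≤ t := by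
    calc 1 - ε / x = (x - ε) / x := by field_simp
      _ ≤ t := div_le_div_of_nonneg_right hxy hx0.le
  have ht : 1 - 2 * ε / x ≤ t ^ 2 := by
    rw [mul_div_assoc]
    nlinarith [sq_nonneg (t - 1)]
  calc (1 - 2 * ε / x) * (1 - cos x) = (1 - 2 * ε / x) * (2 * sin (x / 2) ^ 2) := by
        rw [one_sub_cos_eq_two_mul_sin_sq]
    _ ≤ t ^ 2 * (2 * sin (x / 2) ^ 2) := by gcongr
    _ = 2 * (t * sin (x / 2)) ^ 2 := by ring
    _ ≤ 2 * sin (y / 2) ^ 2 := by gcongr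
    _ = 1 - cos y := (one_sub_cos_eq_two_mul_sin_sq y).symm

lemma natCast_mul_div_mul_div_mem_Icc (i : ℕ) {k d : ℕ} (hk : 0 < k) {c : ℝ} (hc : 0 ≤ c) :
    ((i * k / d : ℕ) : ℝ) * (c / k) ∈ Set.Icc (i * (c / d) - c / k) (i * (c / d)) := by
  have hfloor : ⌊((i * k : ℕ) : ℝ) / d⌋₊ = i * k / d := Nat.floor_div_eq_div _ _
  have hle := Nat.floor_le (by positivity : 0 ≤ ((i * k : ℕ) : ℝ) / d)
  have hlt := Nat.lt_floor_add_one (((i * k : ℕ) : ℝ) / d)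
  rw [hfloor] at hle hlt
  have hi : (i : ℝ) * (c / d) = ((i * k : ℕ) : ℝ) / d * (c / k) := by
    push_cast
    field_simp
  have hck : 0 ≤ c / k := by positivity
  rw [hi]
  constructor <;> nlinarith

lemma Real.pi_mul_mul_sub_one_le_pow_three {x : ℝ} (hx : 0 ≤ x) : π * (x * (x - 1)) ≤ x ^ 3 := by
  nlinarith [mul_nonneg hx (sq_nonneg (x - π / 2)), mul_nonneg hx (mul_nonneg pi_pos.le
    (sub_nonneg.2 pi_le_four))]

lemma sum_two_mul_div_mul_le_half {k d : ℕ} (hd : 0 < d) (hk : 4 * (d : ℝ) ^ 3 / π ≤ k) :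
    ∑ i ∈ Icc 1 (d - 1), 2 * (d : ℝ) / (i * k) ≤ 1 / 2 := by
  have hk0 : (0 : ℝ) < k := lt_of_lt_of_le (by positivity) hk
  have hterm : ∀ i ∈ Icc 1 (d - 1), 2 * (d : ℝ) / (i * k) ≤ 2 * d / k := by
    intro i hi
    have hi : (1 : ℝ) ≤ i := by exact_mod_cast (mem_Icc.1 hi).1
    gcongr
    nlinarith
  have hcard : ((#(Icc 1 (d - 1)) : ℕ) : ℝ) ≤ d - 1 := by
    rw [Nat.card_Icc, Nat.sub_add_cancel hd, Nat.cast_sub hd, Nat.cast_one]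
  have hdk : 4 * (d * (d - 1)) ≤ (k : ℝ) := by
    rw [div_le_iff₀ pi_pos] at hk
    refine le_of_mul_le_mul_left ?_ pi_pos
    linarith [pi_mul_mul_sub_one_le_pow_three d.cast_nonneg]
  calc ∑ i ∈ Icc 1 (d - 1), 2 * (d : ℝ) / (i * k)
      ≤ #(Icc 1 (d - 1)) • (2 * d / k) := sum_le_card_nsmul _ _ _ hterm
    _ ≤ (d - 1) * (2 * d / k) := by rw [nsmul_eq_mul]; gcongr
    _ ≤ 1 / 2 := by
      rw [mul_div_assoc', div_le_div_iff₀ hk0 two_pos]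
      nlinarith

lemma one_sub_two_mul_div_mul_one_sub_cos_le_natDiv (i : ℕ) {k d : ℕ} (hk : 0 < k)
    (hid : i ≤ d) :
    (1 - 2 * d / (i * k)) * (1 - cos (i * (2 * π / d)))
      ≤ 1 - cos ((i * k / d : ℕ) * (2 * π / k)) := by
  obtain ⟨hlo, hhi⟩ := natCast_mul_div_mul_div_mem_Icc i (d := d) hk two_pi_pos.le
  have hc : 2 * (d : ℝ) / (i * k) = 2 * (2 * π / k) / (i * (2 * π / d)) := by
    field_simp
  rw [hc]
  refine one_sub_two_mul_div_mul_one_sub_cos_le (by positivity) hhi ?_ hlo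
  rw [mul_div_left_comm]
  exact mul_le_of_le_one_right two_pi_pos.le
    (div_le_one_of_le₀ (by exact_mod_cast hid) d.cast_nonneg)

theorem prod_one_sub_cos_ge_general (k d : ℕ)
    (hk : 4 * (d : ℝ) ^ 3 / Real.pi ≤ k) (a : ℕ → ℝ)
    (ha : ∀ i, a i = Real.cos ((↑(i * k / d) : ℝ) * (2 * Real.pi / k))) :
    (d : ℝ) ^ 2 / 2 ^ d ≤ ∏ i ∈ Finset.Icc 1 (d - 1), (1 - a i) := by
  rcases d.eq_zero_or_pos with rfl | hd
  · simp
  have hk0 : 0 < k := Nat.cast_pos.1 (lt_of_lt_of_le (by positivity) hk)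
  set c : ℕ → ℝ := fun i ↦ 2 * d / (i * k)
  have hsum : ∑ i ∈ Icc 1 (d - 1), c i ≤ 1 / 2 := sum_two_mul_div_mul_le_half hd hk
  have hc0 : ∀ i ∈ Icc 1 (d - 1), 0 ≤ c i := fun i _ ↦ by positivity
  have hc1 : ∀ i ∈ Icc 1 (d - 1), c i ≤ 1 := fun i hi ↦
    (single_le_sum hc0 hi).trans (hsum.trans (by norm_num))
  have hfactor : ∀ i ∈ Icc 1 (d - 1), (1 - c i) * (1 - cos (i * (2 * π / d))) ≤ 1 - a i :=
    fun i hi ↦ (ha i).symm ▸ one_sub_two_mul_div_mul_one_sub_cos_le_natDiv i hk0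
      ((mem_Icc.1 hi).2.trans (Nat.sub_le d 1))
  have hpow : (2 : ℝ) ^ d = 2 * 2 ^ (d - 1) := by rw [← pow_succ', Nat.sub_add_cancel hd]
  calc (d : ℝ) ^ 2 / 2 ^ d = 1 / 2 * ∏ i ∈ Icc 1 (d - 1), (1 - cos (i * (2 * π / d))) := by
        rw [prod_one_sub_cos_mul_two_pi_div hd.ne', hpow]
        ring
    _ ≤ (∏ i ∈ Icc 1 (d - 1), (1 - c i)) * ∏ i ∈ Icc 1 (d - 1), (1 - cos (i * (2 * π / d))) := by
        gcongr
        · exact prod_nonneg fun i _ ↦ sub_nonneg.2 (cos_le_one _)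
        · exact (one_sub_sum_le_prod_one_sub _ hc0 hc1).trans' (by linarith)
    _ = ∏ i ∈ Icc 1 (d - 1), (1 - c i) * (1 - cos (i * (2 * π / d))) := prod_mul_distrib.symm
    _ ≤ ∏ i ∈ Icc 1 (d - 1), (1 - a i) :=
        prod_le_prod (fun i hi ↦ mul_nonneg (sub_nonneg.2 (hc1 i hi))
          (sub_nonneg.2 (cos_le_one _))) hfactor

/-- Lower bound `∏_{i=1}^{d−1} (1 − a_i) ≥ d²/2^d`. -/
theorem prod_one_sub_cos_ge (k d : ℕ) (hd : 3 ≤ d) (hcop : Nat.Coprime k d)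
    (hk : 4 * (d : ℝ) ^ 3 / Real.pi ≤ k) (a : ℕ → ℝ)
    (ha : ∀ i, a i = Real.cos ((↑(i * k / d) : ℝ) * (2 * Real.pi / k))) :
    (d : ℝ) ^ 2 / 2 ^ d ≤ ∏ i ∈ Finset.Icc 1 (d - 1), (1 - a i) :=
  prod_one_sub_cos_ge_general k d hk a ha
end
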